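/- Let K ≥ 1 be a constant for which Grothendieck's inequality holds: for all m, n, ℓ ∈ ℕ, every real m×n matrix B, and all unit vectors u¹,…,u^m, v¹,…,vⁿ ∈ ℝ^ℓ, Σ_{ij} B_{ij}⟨uⁱ,vʲ⟩ ≤ K · max_{ε∈{±1}^m, δ∈{±1}^n} Σ_{ij} B_{ij}·εᵢ·δⱼ. Let N_X be a norm on ℝⁿ and N a norm on ℝ^m, each invariant under entrywise sign changes and each exactly 2-convex, i.e. for every finite sequence of vectors (x^i), N(( (Σᵢ (x^i_j)² )^{1/2} )_j) ≤ (Σᵢ N(x^i)²)^{1/2}. Then for every real m×n matrix A, every ℓ, and all vectors u¹,…,u^m, v¹,…,vⁿ ∈ ℝ^ℓ with N((‖uⁱ‖₂)_{i}) ≤ 1 and N_X((‖vʲ‖₂)_{j}) ≤ 1: Σ_{ij} A_{ij}·⟨uⁱ,vʲ⟩ ≤ K · sup{ yᵀA x : y ∈ ℝ^m, x ∈ ℝⁿ, N(y) ≤ 1, N_X(x) ≤ 1 }. -/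

import Mathlib

/-!
Write `u i = a i • u₁ i` and `v j = b j • v₁ j` with `u₁ i`, `v₁ j` unit vectors and `a i`, `b j`
the Euclidean lengths. Grothendieck's inequality for the matrix `(A i j * a i * b j)` and the unit
vectors `u₁`, `v₁` produces signs `ε`, `δ`; by sign invariance `y = ε • a` and `x = δ • b` lie in
the unit balls of `N` and `NX`, and `∑ A i j * y i * x j` is exactly the sign sum. The supremum is
finite because sign invariance bounds each coordinate: `|y i| * N (eᵢ) ≤ N y`.
-/

def GrothendieckIneq (K : ℝ) : Prop :=
  ∀ (m n ℓ : ℕ) (B : Matrix (Fin m) (Fin n) ℝ) (u : Fin m → Fin ℓ → ℝ) (v : Fin n → Fin ℓ → ℝ),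
    (∀ i, √(∑ t, u i t ^ 2) = 1) → (∀ j, √(∑ t, v j t ^ 2) = 1) →
    ∃ (ε : Fin m → ℝ) (δ : Fin n → ℝ),
      (∀ i, ε i = 1 ∨ ε i = -1) ∧ (∀ j, δ j = 1 ∨ δ j = -1) ∧
      (∑ i, ∑ j, B i j * (∑ t, u i t * v j t)) ≤ K * ∑ i, ∑ j, B i j * ε i * δ j

structure IsSignInvariantNorm {ι : Type*} (N : (ι → ℝ) → ℝ) : Prop where
  add_le : ∀ x y, N (x + y) ≤ N x + N y
  smul : ∀ (c : ℝ) x, N (c • x) = |c| * N x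
  eq_zero : ∀ x, N x = 0 → x = 0
  sign : ∀ (x σ : ι → ℝ), (∀ i, σ i = 1 ∨ σ i = -1) → N (fun i => σ i * x i) = N x

namespace IsSignInvariantNorm

variable {ι : Type*} {N : (ι → ℝ) → ℝ}

theorem map_zero (hN : IsSignInvariantNorm N) : N 0 = 0 := by
  simpa using hN.smul 0 0

theorem nonneg (hN : IsSignInvariantNorm N) (x : ι → ℝ) : 0 ≤ N x := by
  have h := hN.add_le x ((-1 : ℝ) • x)
  rw [hN.smul, neg_one_smul, add_neg_cancel, hN.map_zero] at h
  simp only [abs_neg, abs_one, one_mul] at h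
  linarith

variable [DecidableEq ι]

theorem single_pos (hN : IsSignInvariantNorm N) (i : ι) : 0 < N (Pi.single i 1) :=
  (hN.nonneg _).lt_of_ne fun h => by
    simpa using congrFun (hN.eq_zero _ h.symm) i

/-- Adding to `y` its copy with every sign but the `i`-th flipped leaves `2 * y i • eᵢ`. -/
theorem abs_apply_mul_le (hN : IsSignInvariantNorm N) (y : ι → ℝ) (i : ι) :
    |y i| * N (Pi.single i 1) ≤ N y := by
  set σ : ι → ℝ := fun j => if j = i then 1 else -1
  have hσ : ∀ j, σ j = 1 ∨ σ j = -1 := fun j => by by_cases h : j = i <;> simp [σ, h]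
  have hsum : y + (fun j => σ j * y j) = (2 * y i) • Pi.single i 1 := by
    ext j
    by_cases h : j = i
    · subst h; simp [σ]; ring
    · simp [σ, h]
  have h := hN.add_le y (fun j => σ j * y j)
  rw [hsum, hN.smul, hN.sign y σ hσ, abs_mul, abs_two] at h
  linarith

theorem abs_apply_le_of_le_one (hN : IsSignInvariantNorm N) {y : ι → ℝ} (hy : N y ≤ 1)
    (i : ι) : |y i| ≤ (N (Pi.single i 1))⁻¹ := by
  rw [← one_div, le_div_iff₀ (hN.single_pos i)]
  exact (hN.abs_apply_mul_le y i).trans hy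

end IsSignInvariantNorm

theorem bddAbove_bilinear_unitBall {ι κ : Type*} [Fintype ι] [Fintype κ] [DecidableEq ι]
    [DecidableEq κ] {N : (ι → ℝ) → ℝ} {NX : (κ → ℝ) → ℝ} (hN : IsSignInvariantNorm N)
    (hNX : IsSignInvariantNorm NX) (A : Matrix ι κ ℝ) :
    BddAbove {r : ℝ | ∃ (y : ι → ℝ) (x : κ → ℝ),
      N y ≤ 1 ∧ NX x ≤ 1 ∧ r = ∑ i, ∑ j, A i j * y i * x j} := by
  refine ⟨∑ i, ∑ j, |A i j| * (N (Pi.single i 1))⁻¹ * (NX (Pi.single j 1))⁻¹, ?_⟩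
  rintro r ⟨y, x, hy, hx, rfl⟩
  refine Finset.sum_le_sum fun i _ => Finset.sum_le_sum fun j _ => ?_
  calc A i j * y i * x j ≤ |A i j| * |y i| * |x j| := by
        simpa only [abs_mul] using le_abs_self (A i j * y i * x j)
    _ ≤ |A i j| * (N (Pi.single i 1))⁻¹ * (NX (Pi.single j 1))⁻¹ := by
        have := hN.abs_apply_le_of_le_one hy i
        have := hNX.abs_apply_le_of_le_one hx j
        gcongr
        exact mul_nonneg (abs_nonneg _) (inv_nonneg.mpr (hN.nonneg _))

theorem exists_unit_smul_eq {ℓ : ℕ} (hℓ : 0 < ℓ) (w : Fin ℓ → ℝ) :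
    ∃ w' : Fin ℓ → ℝ, √(∑ t, w' t ^ 2) = 1 ∧ w = √(∑ t, w t ^ 2) • w' := by
  by_cases hw : w = 0
  · exact ⟨Pi.single ⟨0, hℓ⟩ 1, by simp [sq, Pi.single_apply], by simp [hw]⟩
  have hpos : 0 < ∑ t, w t ^ 2 := by
    obtain ⟨t, ht⟩ := Function.ne_iff.mp hw
    exact Finset.sum_pos' (fun t _ => sq_nonneg _)
      ⟨t, Finset.mem_univ t, pow_two_pos_of_ne_zero ht⟩
  set r := √(∑ t, w t ^ 2)
  have hr : 0 < r := Real.sqrt_pos.mpr hpos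
  refine ⟨r⁻¹ • w, ?_, by rw [smul_inv_smul₀ hr.ne']⟩
  have hsq : ∑ t, (r⁻¹ • w) t ^ 2 = r⁻¹ ^ 2 * r ^ 2 := by
    simp only [Pi.smul_apply, smul_eq_mul, mul_pow, ← Finset.mul_sum,
      Real.sq_sqrt hpos.le, r]
  rw [hsq, ← mul_pow, inv_mul_cancel₀ hr.ne', one_pow, Real.sqrt_one]

theorem GrothendieckIneq.exists_signs {K : ℝ} (hK : GrothendieckIneq K) {m n ℓ : ℕ}
    (A : Matrix (Fin m) (Fin n) ℝ) (u : Fin m → Fin ℓ → ℝ) (v : Fin n → Fin ℓ → ℝ) :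
    ∃ (ε : Fin m → ℝ) (δ : Fin n → ℝ),
      (∀ i, ε i = 1 ∨ ε i = -1) ∧ (∀ j, δ j = 1 ∨ δ j = -1) ∧
      (∑ i, ∑ j, A i j * (∑ t, u i t * v j t)) ≤
        K * ∑ i, ∑ j, A i j * (ε i * √(∑ t, u i t ^ 2)) * (δ j * √(∑ t, v j t ^ 2)) := by
  rcases Nat.eq_zero_or_pos ℓ with rfl | hℓ
  · exact ⟨1, 1, by simp, by simp, by simp⟩
  set a : Fin m → ℝ := fun i => √(∑ t, u i t ^ 2)
  set b : Fin n → ℝ := fun j => √(∑ t, v j t ^ 2)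
  choose u₁ hu₁ hu using fun i => exists_unit_smul_eq hℓ (u i)
  choose v₁ hv₁ hv using fun j => exists_unit_smul_eq hℓ (v j)
  obtain ⟨ε, δ, hε, hδ, h⟩ := hK m n ℓ (.of fun i j => A i j * a i * b j) u₁ v₁ hu₁ hv₁
  refine ⟨ε, δ, hε, hδ, ?_⟩
  have hinner : ∀ i j, ∑ t, u i t * v j t = a i * b j * ∑ t, u₁ i t * v₁ j t := fun i j => by
    rw [hu i, hv j, Finset.mul_sum]
    exact Finset.sum_congr rfl fun t _ => by simp only [Pi.smul_apply, smul_eq_mul]; ring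
  calc (∑ i, ∑ j, A i j * (∑ t, u i t * v j t))
      = ∑ i, ∑ j, (A i j * a i * b j) * ∑ t, u₁ i t * v₁ j t := by
        simp only [hinner, mul_assoc]
    _ ≤ K * ∑ i, ∑ j, (A i j * a i * b j) * ε i * δ j := h
    _ = K * ∑ i, ∑ j, A i j * (ε i * a i) * (δ j * b j) := by
        congr 1; exact Finset.sum_congr rfl fun i _ => Finset.sum_congr rfl fun j _ => by ring

theorem grothendieck_bound_on_relaxation (K : ℝ) (hK : 1 ≤ K)
    -- Grothendieck's inequality with constant K:
    (hGroth : ∀ (m n ℓ : ℕ) (B : Matrix (Fin m) (Fin n) ℝ)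
        (u : Fin m → Fin ℓ → ℝ) (v : Fin n → Fin ℓ → ℝ),
      (∀ i, Real.sqrt (∑ t, u i t ^ 2) = 1) → (∀ j, Real.sqrt (∑ t, v j t ^ 2) = 1) →
      ∃ (ε : Fin m → ℝ) (δ : Fin n → ℝ),
        (∀ i, ε i = 1 ∨ ε i = -1) ∧ (∀ j, δ j = 1 ∨ δ j = -1) ∧
        (∑ i, ∑ j, B i j * (∑ t, u i t * v j t)) ≤ K * ∑ i, ∑ j, B i j * ε i * δ j)
    (m n : ℕ) (N : (Fin m → ℝ) → ℝ) (NX : (Fin n → ℝ) → ℝ)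
    -- N is a norm on ℝ^m:
    (hN_tri : ∀ x y, N (x + y) ≤ N x + N y)
    (hN_smul : ∀ (c : ℝ) x, N (c • x) = |c| * N x)
    (hN_def : ∀ x, N x = 0 → x = 0)
    -- NX is a norm on ℝ^n:
    (hNX_tri : ∀ x y, NX (x + y) ≤ NX x + NX y)
    (hNX_smul : ∀ (c : ℝ) x, NX (c • x) = |c| * NX x)
    (hNX_def : ∀ x, NX x = 0 → x = 0)
    -- sign-invariance:
    (hN_sign : ∀ (x : Fin m → ℝ) (σ : Fin m → ℝ), (∀ i, σ i = 1 ∨ σ i = -1) →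
      N (fun i => σ i * x i) = N x)
    (hNX_sign : ∀ (x : Fin n → ℝ) (σ : Fin n → ℝ), (∀ j, σ j = 1 ∨ σ j = -1) →
      NX (fun j => σ j * x j) = NX x)
    (A : Matrix (Fin m) (Fin n) ℝ) (ℓ : ℕ)
    (u : Fin m → Fin ℓ → ℝ) (v : Fin n → Fin ℓ → ℝ)
    (hu : N (fun i => Real.sqrt (∑ t, u i t ^ 2)) ≤ 1)
    (hv : NX (fun j => Real.sqrt (∑ t, v j t ^ 2)) ≤ 1) :
    (∑ i, ∑ j, A i j * (∑ t, u i t * v j t)) ≤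
      K * sSup {r : ℝ | ∃ (y : Fin m → ℝ) (x : Fin n → ℝ),
        N y ≤ 1 ∧ NX x ≤ 1 ∧ r = ∑ i, ∑ j, A i j * y i * x j} := by
  have hN : IsSignInvariantNorm N := ⟨hN_tri, hN_smul, hN_def, hN_sign⟩
  have hNX : IsSignInvariantNorm NX := ⟨hNX_tri, hNX_smul, hNX_def, hNX_sign⟩
  obtain ⟨ε, δ, hε, hδ, hle⟩ := GrothendieckIneq.exists_signs hGroth A u v
  refine hle.trans (mul_le_mul_of_nonneg_left (le_csSup (bddAbove_bilinear_unitBall hN hNX A)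
    ⟨_, _, ?_, ?_, rfl⟩) (by linarith))
  · rwa [hN_sign _ ε hε]
  · rwa [hNX_sign _ δ hδ]
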